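/- arXiv:1908.00567 — 3 statements merged into one kernel-verified Lean document; each statement's English description precedes it below -/
import Mathlib

section
/- Let Q be a finite acyclic quiver and i a vertex of Q, and let e_i denote the simple dimension vector with value 1 at vertex i and 0 elsewhere. For any univariate polynomials f₁,…,f_r ∈ ℚ[x], the iterated left-to-right CoHA product (f₁(ω_{i,1}) ∈ ℋ_{e_i}) * (f₂(ω_{i,1}) ∈ ℋ_{e_i}) * ⋯ * (f_r(ω_{i,1}) ∈ ℋ_{e_i}) ∈ ℋ_{r·e_i} equals the polynomial obtained from the ℋ(A₁)-product f₁(x₁) * f₂(x₁) * ⋯ * f_r(x₁) ∈ ℋ_r(A₁) by substituting x_b ↦ ω_{i,b} for b = 1,…,r. Consequently the subalgebra 𝒜_{e_i} of ℋ(Q) generated under * by {f(ω_{i,1}) : f ∈ ℚ[x]} ⊆ ℋ_{e_i} is isomorphic as an algebra to ℋ(A₁). -/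
open MvPolynomial
open scoped Classical

/-- A finite quiver with vertex set `Fin n`: a finite type of arrows together with
head and tail maps. -/
structure FinQuiver (n : ℕ) where
  Arr : Type
  [fintypeArr : Fintype Arr]
  hd : Arr → Fin n
  tl : Arr → Fin n

attribute [instance] FinQuiver.fintypeArr

variable {n : ℕ}

/-- `Q` is acyclic: there is no oriented cycle, i.e. no path
`a₁, …, a_{k+1}` (with `hd aₘ = tl aₘ₊₁`) whose final head equals its initial tail. -/
def FinQuiver.Acyclic (Q : FinQuiver n) : Prop :=
  ∀ (k : ℕ) (c : Fin (k + 1) → Q.Arr),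
    (∀ m : Fin k, Q.hd (c m.castSucc) = Q.tl (c m.succ)) →
    Q.hd (c (Fin.last k)) ≠ Q.tl (c 0)

/-- The Euler form `χ_Q` of the quiver `Q`. -/
def FinQuiver.euler (Q : FinQuiver n) (α β : Fin n → ℕ) : ℤ :=
  ∑ i : Fin n, (α i : ℤ) * β i - ∑ a : Q.Arr, (α (Q.tl a) : ℤ) * β (Q.hd a)

/-- The opposite antisymmetrization `⟨α,β⟩ = χ_Q(β,α) − χ_Q(α,β)`. -/
def FinQuiver.lam (Q : FinQuiver n) (α β : Fin n → ℕ) : ℤ :=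
  Q.euler β α - Q.euler α β

/-- The polynomial ring in the variables `ω_{i,j}`, `i ∈ Q₀`, `j ∈ ℕ` (0-indexed). -/
abbrev PolyQ (n : ℕ) := MvPolynomial (Fin n × ℕ) ℚ

/-- The permutation of the variables at vertex `i` induced by a permutation of `ℕ`. -/
def vertexPerm (i : Fin n) (σ : Equiv.Perm ℕ) : Fin n × ℕ → Fin n × ℕ :=
  fun p => if p.1 = i then (i, σ p.2) else p

/-- `f` is, for each vertex `i`, symmetric in the variables `ω_{i,0},…,ω_{i,γ i − 1}`. -/
def SymmIn (γ : Fin n → ℕ) (f : PolyQ n) : Prop :=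
  ∀ (i : Fin n) (σ : Equiv.Perm ℕ),
    (∀ j : ℕ, σ j ≠ j → j < γ i) → rename (vertexPerm i σ) f = f

lemma vars_smul_subset (c : ℚ) (f : PolyQ n) : (c • f).vars ⊆ f.vars := by
  rw [MvPolynomial.smul_eq_C_mul]
  refine (MvPolynomial.vars_mul _ _).trans ?_
  simp [MvPolynomial.vars_C]

/-- `ℋ_γ`: polynomials using only the variables `ω_{i,j}`, `j < γ i`, which are
symmetric at each vertex.  A `ℚ`-submodule of `PolyQ n`. -/
noncomputable def Hspace (γ : Fin n → ℕ) : Submodule ℚ (PolyQ n) where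
  carrier := {f | (∀ p ∈ f.vars, p.2 < γ p.1) ∧ SymmIn γ f}
  add_mem' := by
    rintro f g ⟨hf1, hf2⟩ ⟨hg1, hg2⟩
    refine ⟨fun p hp => ?_, fun i σ hσ => ?_⟩
    · rcases Finset.mem_union.mp (MvPolynomial.vars_add_subset f g hp) with h | h
      exacts [hf1 p h, hg1 p h]
    · rw [map_add, hf2 i σ hσ, hg2 i σ hσ]
  zero_mem' := by
    refine ⟨fun p hp => ?_, fun i σ hσ => map_zero _⟩
    simp [MvPolynomial.vars_0] at hp
  smul_mem' := by
    rintro c f ⟨hf1, hf2⟩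
    refine ⟨fun p hp => hf1 p (vars_smul_subset c f hp), fun i σ hσ => ?_⟩
    rw [map_smul, hf2 i σ hσ]

/-- Polynomials all of whose variables sit at vertex `i`. -/
noncomputable def onlyVertex (i : Fin n) : Submodule ℚ (PolyQ n) where
  carrier := {f | ∀ p ∈ f.vars, p.1 = i}
  add_mem' := by
    intro f g hf hg p hp
    rcases Finset.mem_union.mp (MvPolynomial.vars_add_subset f g hp) with h | h
    exacts [hf p h, hg p h]
  zero_mem' := by
    intro p hp
    simp [MvPolynomial.vars_0] at hp
  smul_mem' := by
    intro c f hf p hp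
    exact hf p (vars_smul_subset c f hp)

/-- `𝒜_{β,m}`: the subspace of `ℋ_{m·β}` of polynomials depending only on the
variables `ω_{i,0},…,ω_{i,m−1}` at the distinguished vertex `i`. -/
noncomputable def Aspace (β : Fin n → ℕ) (i : Fin n) (m : ℕ) : Submodule ℚ (PolyQ n) :=
  Hspace (fun v => m * β v) ⊓ onlyVertex i

/-- Substitute for the `j`-th variable at vertex `i` the variable `ω_{i,s}` where `s`
is the `j`-th element of `T i` in increasing order. -/
noncomputable def substAlong (T : Fin n → Finset ℕ) : PolyQ n →ₐ[ℚ] PolyQ n :=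
  aeval fun p : Fin n × ℕ => X (p.1, ((T p.1).sort (· ≤ ·)).getD p.2 0)

/-- The index set of the Kontsevich–Soibelman localization sum:
for each vertex, a `γ₁ i`-element subset of `{0,…,γ₁ i + γ₂ i − 1}`. -/
def shuffles (γ₁ γ₂ : Fin n → ℕ) : Finset (Fin n → Finset ℕ) :=
  Fintype.piFinset fun i => (Finset.range (γ₁ i + γ₂ i)).powerset.filter fun s => s.card = γ₁ i

def shuffleCompl (γ₁ γ₂ : Fin n → ℕ) (S : Fin n → Finset ℕ) : Fin n → Finset ℕ :=
  fun i => Finset.range (γ₁ i + γ₂ i) \ S i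

/-- The numerator factor attached to the arrow `a`:
`∏_{j' ∈ S̄_{h a}} ∏_{j ∈ S_{t a}} (ω_{h a, j'} − ω_{t a, j})`. -/
noncomputable def arrowFactor (Q : FinQuiver n) (γ₁ γ₂ : Fin n → ℕ)
    (S : Fin n → Finset ℕ) (a : Q.Arr) : PolyQ n :=
  ∏ j' ∈ shuffleCompl γ₁ γ₂ S (Q.hd a), ∏ j ∈ S (Q.tl a),
    (X (Q.hd a, j') - X (Q.tl a, j))

noncomputable def interactionNum (Q : FinQuiver n) (γ₁ γ₂ : Fin n → ℕ)
    (S : Fin n → Finset ℕ) : PolyQ n :=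
  ∏ a : Q.Arr, arrowFactor Q γ₁ γ₂ S a

noncomputable def interactionDen (γ₁ γ₂ : Fin n → ℕ) (S : Fin n → Finset ℕ) : PolyQ n :=
  ∏ i : Fin n, ∏ j' ∈ shuffleCompl γ₁ γ₂ S i, ∏ j ∈ S i, (X (i, j') - X (i, j))

/-- The Kontsevich–Soibelman localization sum, an element of the field of rational
functions (the fraction field of `PolyQ n`). -/
noncomputable def cohaMulRat (Q : FinQuiver n) (γ₁ γ₂ : Fin n → ℕ) (f₁ f₂ : PolyQ n) :
    FractionRing (PolyQ n) :=
  ∑ S ∈ shuffles γ₁ γ₂,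
    algebraMap (PolyQ n) (FractionRing (PolyQ n))
        (substAlong S f₁ * substAlong (shuffleCompl γ₁ γ₂ S) f₂ * interactionNum Q γ₁ γ₂ S) /
      algebraMap (PolyQ n) (FractionRing (PolyQ n)) (interactionDen γ₁ γ₂ S)

/-- The CoHA product `f₁ * f₂`: the unique polynomial representing the localization
sum (and `0` if the sum were not a polynomial, which never happens). -/
noncomputable def cohaMul (Q : FinQuiver n) (γ₁ γ₂ : Fin n → ℕ) (f₁ f₂ : PolyQ n) : PolyQ n :=
  if h : ∃ P : PolyQ n,
      algebraMap (PolyQ n) (FractionRing (PolyQ n)) P = cohaMulRat Q γ₁ γ₂ f₁ f₂ then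
    h.choose
  else 0

/-- Iterated, left-to-right, CoHA product of a list of dimension-vector/polynomial pairs.
Returns the total dimension vector together with the product. -/
noncomputable def cohaProd (Q : FinQuiver n) :
    List ((Fin n → ℕ) × PolyQ n) → (Fin n → ℕ) × PolyQ n
  | [] => (fun _ => 0, 1)
  | x :: xs => xs.foldl (fun acc y => (acc.1 + y.1, cohaMul Q acc.1 y.1 acc.2 y.2)) x

/-- Left-to-right CoHA product `f 0 * f 1 * ⋯ * f (r−1)` with `f u ∈ ℋ_{γ u}`. -/
noncomputable def cohaProdFin (Q : FinQuiver n) {r : ℕ} (γ : Fin r → Fin n → ℕ)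
    (f : Fin r → PolyQ n) : PolyQ n :=
  (cohaProd Q (List.ofFn fun u => (γ u, f u))).2

/-- The quiver with one vertex and no arrows. -/
def A1 : FinQuiver 1 := { Arr := Empty, hd := Empty.elim, tl := Empty.elim }

/-- `ψ_p = x₁ ^ p ∈ ℋ₁(A₁)`. -/
noncomputable def psi (p : ℕ) : PolyQ 1 := X ((0 : Fin 1), 0) ^ p

def oneDim : Fin 1 → ℕ := fun _ => 1

/-- The simple dimension vector `e_i`. -/
def simpleDim (i : Fin n) : Fin n → ℕ := fun v => if v = i then 1 else 0

/-- A subquiver of `Q`. -/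
structure Subquiver (Q : FinQuiver n) where
  verts : Finset (Fin n)
  arrows : Finset Q.Arr
  hd_mem : ∀ a ∈ arrows, Q.hd a ∈ verts
  tl_mem : ∀ a ∈ arrows, Q.tl a ∈ verts

def Subquiver.Full {Q : FinQuiver n} (Q' : Subquiver Q) : Prop :=
  ∀ a : Q.Arr, Q.hd a ∈ Q'.verts → Q.tl a ∈ Q'.verts → a ∈ Q'.arrows

/-- Adjacency in the underlying undirected graph of a subquiver. -/
def Subquiver.Adj {Q : FinQuiver n} (Q' : Subquiver Q) (x y : Fin n) : Prop :=
  ∃ a ∈ Q'.arrows, (Q.hd a = x ∧ Q.tl a = y) ∨ (Q.hd a = y ∧ Q.tl a = x)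

def Subquiver.Connected {Q : FinQuiver n} (Q' : Subquiver Q) : Prop :=
  ∀ x ∈ Q'.verts, ∀ y ∈ Q'.verts, Relation.ReflTransGen Q'.Adj x y

/-- The Euler form of the subquiver `Q'` (on `ℤ`-valued vectors). -/
def Subquiver.eulerZ {Q : FinQuiver n} (Q' : Subquiver Q) (α β : Fin n → ℤ) : ℤ :=
  ∑ i ∈ Q'.verts, α i * β i - ∑ a ∈ Q'.arrows, α (Q.tl a) * β (Q.hd a)

/-- Positive definiteness of the Tits form of `Q'` on vectors supported on `Q'`. -/
def Subquiver.PosDefTits {Q : FinQuiver n} (Q' : Subquiver Q) : Prop :=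
  ∀ β : Fin n → ℤ, (∀ i, i ∉ Q'.verts → β i = 0) → β ≠ 0 → 0 < Q'.eulerZ β β

/-- A connected full subquiver with positive definite Tits form. -/
def Subquiver.IsDynkin {Q : FinQuiver n} (Q' : Subquiver Q) : Prop :=
  Q'.Connected ∧ Q'.Full ∧ Q'.PosDefTits

/-- A positive root of `Q'`: a nonzero dimension vector supported on `Q'` with
Tits form equal to `1`. -/
def Subquiver.IsPosRoot {Q : FinQuiver n} (Q' : Subquiver Q) (β : Fin n → ℕ) : Prop :=
  (∀ i, i ∉ Q'.verts → β i = 0) ∧ β ≠ 0 ∧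
    Q'.eulerZ (fun i => (β i : ℤ)) (fun i => (β i : ℤ)) = 1

/-- A subquiver regarded as a quiver in its own right (on the ambient vertex set). -/
def Subquiver.toQuiver {Q : FinQuiver n} (Q' : Subquiver Q) : FinQuiver n :=
  { Arr := {a : Q.Arr // a ∈ Q'.arrows}, hd := fun a => Q.hd a.1, tl := fun a => Q.tl a.1 }

/-- An (ordered list) subquiver partition `𝒬• = (Q¹,…,Q^ℓ)`: nonempty connected
subquivers whose vertex sets partition `Q₀`. -/
structure SubqPartition (Q : FinQuiver n) (ℓ : ℕ) where
  part : Fin ℓ → Subquiver Q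
  nonempty' : ∀ j, (part j).verts.Nonempty
  connected' : ∀ j, (part j).Connected
  cover : ∀ i : Fin n, ∃! j, i ∈ (part j).verts

/-- The set `𝒬•₁` of arrows belonging to one of the parts. -/
noncomputable def SubqPartition.arrs {Q : FinQuiver n} {ℓ : ℕ} (P : SubqPartition Q ℓ) : Finset Q.Arr :=
  Finset.univ.biUnion fun j => (P.part j).arrows

/-- The partition is admissible and ordered: every arrow not inside a part goes from a
later part to an earlier part (head before tail). -/
def SubqPartition.Ordered {Q : FinQuiver n} {ℓ : ℕ} (P : SubqPartition Q ℓ) : Prop :=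
  ∀ a : Q.Arr, a ∉ P.arrs → ∀ i j : Fin ℓ,
    Q.hd a ∈ (P.part i).verts → Q.tl a ∈ (P.part j).verts → i < j

/-- Every part is a Dynkin subquiver. -/
def SubqPartition.Dynkin {Q : FinQuiver n} {ℓ : ℕ} (P : SubqPartition Q ℓ) : Prop :=
  ∀ j, (P.part j).IsDynkin

/-- `β : Fin r → (Fin n → ℕ)` is a Reineke-ordered enumeration of `Φ₊(𝒬•)`, with
`blk u` the part to which `β u` belongs: block-monotone, enumerating all positive roots
without repetition, and within each block `u < v → ⟨β u, β v⟩ ≥ 0`. -/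
def IsReinekeOrder {Q : FinQuiver n} {ℓ : ℕ} (P : SubqPartition Q ℓ) {r : ℕ}
    (β : Fin r → Fin n → ℕ) (blk : Fin r → Fin ℓ) : Prop :=
  Monotone blk ∧
  (∀ u, (P.part (blk u)).IsPosRoot (β u)) ∧
  Function.Injective β ∧
  (∀ j (b : Fin n → ℕ), (P.part j).IsPosRoot b → ∃ u, β u = b) ∧
  (∀ u v : Fin r, u < v → blk u = blk v → 0 ≤ Q.lam (β u) (β v))

/-!
Since the dimension vectors involved vanish away from `i`, every arrow factor of the
localization formula for `ℋ(Q)` is an empty product, except for loops at `i`, which acyclicity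
excludes; what remains is the formula for `ℋ(A₁)` in the variables `ω_{i,·}`.

In `ℋ(A₁)`, induction on `r` and a Laplace expansion along the last row give
`(f₁ * ⋯ * f_r) · V = det (f_u(x_k))`, where `V` is the Vandermonde determinant; `V` divides
every alternant because each factor `x_b - x_a` does. Hence the `r`-fold products lie in
`ℋ_r(A₁)`. Conversely, for symmetric `f` the polynomial `f · V` is alternating, and averaging
over `S_r` writes `r! · f · V` as a combination of alternants `det (x_k ^ d_u)`, that is, `f` as
a combination of `r`-fold products.
-/

theorem FinQuiver.Acyclic.hd_ne_tl {Q : FinQuiver n} (hQ : Q.Acyclic) (a : Q.Arr) :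
    Q.hd a ≠ Q.tl a :=
  hQ 0 (fun _ => a) Fin.elim0

namespace CoHA

section Determinants

variable {R : Type*} [CommRing R] {m : ℕ}

theorem det_vandermonde_comp_perm (v : Fin m → R) (σ : Equiv.Perm (Fin m)) :
    (Matrix.vandermonde (v ∘ σ)).det = Equiv.Perm.sign σ * (Matrix.vandermonde v).det :=
  Matrix.det_permute σ (Matrix.vandermonde v)

theorem map_det_vandermonde {T F : Type*} [CommRing T] [FunLike F R T] [RingHomClass F R T]
    (φ : F) (v : Fin m → R) : φ (Matrix.vandermonde v).det = (Matrix.vandermonde (φ ∘ v)).det := by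
  simp only [Matrix.det_vandermonde, map_prod, map_sub, Function.comp_apply]

theorem det_vandermonde_succ (v : Fin (m + 1) → R) :
    (Matrix.vandermonde v).det =
      (∏ k : Fin m, (v k.succ - v 0)) * (Matrix.vandermonde (v ∘ Fin.succ)).det := by
  simp only [Matrix.det_vandermonde, Fin.prod_univ_succ, Fin.prod_Ioi_zero, Fin.prod_Ioi_succ,
    Function.comp_apply]

/-- Moving the `j`-th point to the front with `Fin.cycleRange` costs the sign `(-1) ^ j`. -/
theorem prod_sub_mul_det_vandermonde_succAbove (v : Fin (m + 1) → R) (j : Fin (m + 1)) :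
    (∏ k : Fin m, (v j - v (j.succAbove k))) * (Matrix.vandermonde (v ∘ j.succAbove)).det =
      (-1) ^ (m + (j : ℕ)) * (Matrix.vandermonde v).det := by
  have h := det_vandermonde_comp_perm v j.cycleRange.symm
  rw [det_vandermonde_succ, Equiv.Perm.sign_symm, Fin.sign_cycleRange] at h
  simp only [Function.comp_def, Fin.cycleRange_symm_zero, Fin.cycleRange_symm_succ] at h ⊢
  have hneg : ∏ k : Fin m, (v j - v (j.succAbove k)) =
      (-1) ^ m * ∏ k : Fin m, (v (j.succAbove k) - v j) := by
    simpa using Finset.prod_neg (s := Finset.univ) fun k : Fin m => v (j.succAbove k) - v j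
  rw [hneg, mul_assoc, h, pow_add]
  push_cast
  ring

variable {S : Type*} [CommRing S] [Algebra R S]

noncomputable def evalMatrix (F : Fin m → Polynomial R) (v : Fin m → S) :
    Matrix (Fin m) (Fin m) S :=
  Matrix.of fun u k => Polynomial.aeval (v k) (F u)

theorem det_evalMatrix_comp_perm (F : Fin m → Polynomial R) (v : Fin m → S)
    (σ : Equiv.Perm (Fin m)) :
    (evalMatrix F (v ∘ σ)).det = Equiv.Perm.sign σ * (evalMatrix F v).det :=
  Matrix.det_permute' σ (evalMatrix F v)

theorem map_det_evalMatrix {T : Type*} [CommRing T] [Algebra R T] (φ : S →ₐ[R] T)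
    (F : Fin m → Polynomial R) (v : Fin m → S) :
    φ (evalMatrix F v).det = (evalMatrix F (φ ∘ v)).det := by
  rw [AlgHom.map_det]
  congr 1
  ext u k
  simp [evalMatrix, Polynomial.aeval_algHom_apply]

theorem det_evalMatrix_succ (F : Fin (m + 1) → Polynomial R) (v : Fin (m + 1) → S) :
    (evalMatrix F v).det = ∑ j : Fin (m + 1),
      (-1) ^ (m + (j : ℕ)) * Polynomial.aeval (v j) (F (Fin.last m)) *
        (evalMatrix (F ∘ Fin.castSucc) (v ∘ j.succAbove)).det := by
  rw [Matrix.det_succ_row _ (Fin.last m)]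
  simp only [Fin.val_last, Fin.succAbove_last]
  rfl

theorem det_evalMatrix_X_pow (e : Fin m → ℕ) (v : Fin m → S) :
    (evalMatrix (fun u => (Polynomial.X : Polynomial R) ^ e u) v).det =
      ∑ π : Equiv.Perm (Fin m), Equiv.Perm.sign π * ∏ u, v (π u) ^ e u := by
  rw [← Matrix.det_transpose, Matrix.det_apply']
  simp [evalMatrix]

end Determinants

section Divisibility

variable {σ R : Type*} [CommRing R]

theorem X_sub_X_dvd_sub_aeval_update (a b : σ) (f : MvPolynomial σ R) :
    X a - X b ∣ f - aeval (Function.update X a (X b)) f := by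
  classical
  rw [← Ideal.mem_span_singleton, ← Ideal.Quotient.eq]
  set I := Ideal.span {(X a - X b : MvPolynomial σ R)}
  have hab : Ideal.Quotient.mk I (X a) = Ideal.Quotient.mk I (X b) :=
    Ideal.Quotient.eq.mpr (Ideal.mem_span_singleton_self _)
  have h : (Ideal.Quotient.mkₐ R I).comp (aeval (Function.update X a (X b))) =
      Ideal.Quotient.mkₐ R I := by
    refine algHom_ext fun s => ?_
    rcases eq_or_ne s a with rfl | hs
    · simpa using hab.symm
    · simp [Function.update_of_ne hs]
  exact (congrArg (· f) h).symm

theorem X_sub_X_dvd_iff {a b : σ} (hab : a ≠ b) (f : MvPolynomial σ R) :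
    X a - X b ∣ f ↔ aeval (Function.update (X : σ → MvPolynomial σ R) a (X b)) f = 0 := by
  classical
  refine ⟨?_, fun h => by simpa only [h, sub_zero] using X_sub_X_dvd_sub_aeval_update a b f⟩
  rintro ⟨c, rfl⟩
  simp [Function.update_of_ne hab.symm]

theorem prime_X_sub_X [IsDomain R] {a b : σ} (hab : a ≠ b) :
    Prime (X a - X b : MvPolynomial σ R) := by
  refine ⟨sub_ne_zero.mpr (X_injective.ne hab), fun h => ?_, fun c d => ?_⟩
  · simpa using h.map (eval (0 : σ → R))
  · simp only [X_sub_X_dvd_iff hab, map_mul, mul_eq_zero, imp_self]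

/-- Each factor `X (x j) - X (x i)` kills the determinant, as it identifies two columns;
distinct factors are non-associated primes. -/
theorem det_vandermonde_dvd_det_evalMatrix [IsDomain R] [UniqueFactorizationMonoid R] {m : ℕ}
    {x : Fin m → σ} (hx : Function.Injective x) (F : Fin m → Polynomial R) :
    (Matrix.vandermonde (X ∘ x : Fin m → MvPolynomial σ R)).det ∣
      (evalMatrix F (X ∘ x : Fin m → MvPolynomial σ R)).det := by
  classical
  have hlt : ∀ p ∈ Finset.univ.sigma fun i : Fin m => Finset.Ioi i, p.1 < p.2 :=
    fun p hp => Finset.mem_Ioi.mp (Finset.mem_sigma.mp hp).2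
  have hne : ∀ p ∈ Finset.univ.sigma fun i : Fin m => Finset.Ioi i, x p.2 ≠ x p.1 :=
    fun p hp => hx.ne (hlt p hp).ne'
  rw [Matrix.det_vandermonde, Finset.prod_sigma']
  simp only [Function.comp_apply]
  refine Finset.prod_dvd_of_isRelPrime (fun p hp q hq hpq => ?_) fun p hp => ?_
  · rw [Function.onFun, (prime_X_sub_X (hne p hp)).irreducible.isRelPrime_iff_not_dvd,
      X_sub_X_dvd_iff (hne p hp)]
    have hp' := hlt p hp
    have hq' := hlt q hq
    obtain ⟨i, j⟩ := p
    obtain ⟨i', j'⟩ := q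
    have hpq' : i ≠ i' ∨ j ≠ j' := by
      by_contra! h
      exact hpq (by rw [h.1, h.2])
    simp only [Function.update_apply, hx.eq_iff, map_sub, aeval_X, sub_eq_zero]
    split_ifs <;> simp only [X_injective.eq_iff, hx.eq_iff] at * <;> omega
  · rw [X_sub_X_dvd_iff (hne p hp), map_det_evalMatrix]
    refine Matrix.det_zero_of_column_eq (hlt p hp).ne' fun u => ?_
    simp [evalMatrix, Function.update_of_ne (hne p hp).symm]

end Divisibility

section EraseRange

variable {m : ℕ}

theorem erase_range_eq_map_succAbove (j : Fin (m + 1)) :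
    (Finset.range (m + 1)).erase j = Finset.univ.map (j.succAboveEmb.trans Fin.valEmbedding) := by
  ext a
  simp only [Finset.mem_erase, Finset.mem_range, Finset.mem_map, Finset.mem_univ, true_and,
    Function.Embedding.trans_apply, Fin.succAboveEmb_apply, Fin.valEmbedding_apply]
  constructor
  · rintro ⟨ha, hlt⟩
    obtain ⟨k, hk⟩ := Fin.exists_succAbove_eq (x := ⟨a, hlt⟩) (y := j) (Fin.ne_of_val_ne ha)
    exact ⟨k, congrArg Fin.val hk⟩
  · rintro ⟨k, rfl⟩
    exact ⟨Fin.val_ne_iff.mpr (j.succAbove_ne k), (j.succAbove k).isLt⟩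

theorem card_erase_range (j : Fin (m + 1)) : ((Finset.range (m + 1)).erase j).card = m := by
  simp [erase_range_eq_map_succAbove]

theorem prod_erase_range {M : Type*} [CommMonoid M] (f : ℕ → M) (j : Fin (m + 1)) :
    ∏ k ∈ (Finset.range (m + 1)).erase j, f k = ∏ k : Fin m, f (j.succAbove k) := by
  simp [erase_range_eq_map_succAbove]

theorem sort_erase_range_getD (j : Fin (m + 1)) (k : Fin m) :
    (((Finset.range (m + 1)).erase j).sort (· ≤ ·)).getD k 0 = j.succAbove k := by
  have hf := Finset.orderEmbOfFin_unique (card_erase_range j)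
    (f := fun k : Fin m => (j.succAbove k : ℕ))
    (fun k => by simp [erase_range_eq_map_succAbove]) (Fin.strictMono_succAbove j)
  rw [List.getD_eq_getElem _ _ (by simp [card_erase_range]), congrFun hf k,
    Finset.orderEmbOfFin_apply]
  rfl

theorem sum_shuffles_A1_one {M : Type*} [AddCommMonoid M] (φ : (Fin 1 → Finset ℕ) → M) :
    ∑ S ∈ shuffles (fun _ : Fin 1 => m) (fun _ => 1), φ S =
      ∑ j : Fin (m + 1), φ (fun _ => (Finset.range (m + 1)).erase j) := by
  symm
  refine Finset.sum_bij (fun j _ => fun _ => (Finset.range (m + 1)).erase j) (fun j _ => ?_)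
    (fun j₁ _ j₂ _ h => ?_) (fun S hS => ?_) fun _ _ => rfl
  · simp [shuffles, Finset.erase_subset, card_erase_range]
  · exact Fin.val_injective
      ((Finset.erase_inj _ (Finset.mem_range.mpr j₁.isLt)).mp (congrFun h 0))
  · obtain ⟨hsub, hcard⟩ : S 0 ⊆ Finset.range (m + 1) ∧ (S 0).card = m := by
      simpa [shuffles] using Fintype.mem_piFinset.mp hS 0
    obtain ⟨c, hc⟩ := Finset.card_eq_one.mp (show (Finset.range (m + 1) \ S 0).card = 1 by
      rw [Finset.card_sdiff_of_subset hsub, Finset.card_range, hcard, Nat.add_sub_cancel_left])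
    have hcm : c ∈ Finset.range (m + 1) :=
      (Finset.mem_sdiff.mp (hc ▸ Finset.mem_singleton_self c)).1
    refine ⟨⟨c, Finset.mem_range.mp hcm⟩, Finset.mem_univ _, funext fun v => ?_⟩
    rw [Subsingleton.elim v 0, Finset.erase_eq, ← hc, Finset.sdiff_sdiff_eq_self hsub]

end EraseRange

theorem cohaMul_eq_of_algebraMap_eq {Q : FinQuiver n} {γ₁ γ₂ : Fin n → ℕ} {f₁ f₂ P : PolyQ n}
    (h : algebraMap (PolyQ n) (FractionRing (PolyQ n)) P = cohaMulRat Q γ₁ γ₂ f₁ f₂) :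
    cohaMul Q γ₁ γ₂ f₁ f₂ = P := by
  have hex : ∃ P, algebraMap (PolyQ n) (FractionRing (PolyQ n)) P = cohaMulRat Q γ₁ γ₂ f₁ f₂ :=
    ⟨P, h⟩
  rw [cohaMul, dif_pos hex]
  exact IsFractionRing.injective (PolyQ n) _ (hex.choose_spec.trans h.symm)

theorem substAlong_X (T : Fin n → Finset ℕ) (p : Fin n × ℕ) :
    substAlong T (X p) = X (p.1, ((T p.1).sort (· ≤ ·)).getD p.2 0) :=
  aeval_X _ p

section A1

/-- The variables `x₁, …, x_m` of `ℋ(A₁)`; `xvec m k` is `x_{k+1}`. -/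
noncomputable def xvec (m : ℕ) (k : Fin m) : PolyQ 1 :=
  X (0, k)

theorem det_vandermonde_xvec_ne_zero (m : ℕ) : (Matrix.vandermonde (xvec m)).det ≠ 0 :=
  Matrix.det_vandermonde_ne_zero_iff.mpr
    fun _ _ h => Fin.val_injective (congrArg Prod.snd (X_injective h))

theorem det_vandermonde_xvec_dvd {m : ℕ} (F : Fin m → Polynomial ℚ) :
    (Matrix.vandermonde (xvec m)).det ∣ (evalMatrix F (xvec m)).det :=
  det_vandermonde_dvd_det_evalMatrix (x := fun k : Fin m => ((0 : Fin 1), (k : ℕ)))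
    (fun _ _ h => Fin.val_injective (congrArg Prod.snd h)) F

theorem interactionNum_A1 (γ₁ γ₂ : Fin 1 → ℕ) (S : Fin 1 → Finset ℕ) :
    interactionNum A1 γ₁ γ₂ S = 1 :=
  rfl

variable {m : ℕ}

theorem substAlong_erase_comp (j : Fin (m + 1)) :
    substAlong (fun _ => (Finset.range (m + 1)).erase j) ∘ xvec m = xvec (m + 1) ∘ j.succAbove := by
  funext k
  simp only [Function.comp_apply, xvec, substAlong_X, sort_erase_range_getD]

theorem cohaMulRat_A1_one (g h : PolyQ 1) :
    cohaMulRat A1 (fun _ => m) (fun _ => 1) g h = ∑ j : Fin (m + 1),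
      algebraMap (PolyQ 1) (FractionRing (PolyQ 1))
          (substAlong (fun _ => (Finset.range (m + 1)).erase j) g *
            substAlong (fun _ => {(j : ℕ)}) h) /
        algebraMap (PolyQ 1) (FractionRing (PolyQ 1))
          (∏ k : Fin m, (xvec (m + 1) j - xvec (m + 1) (j.succAbove k))) := by
  have hcompl : ∀ j : Fin (m + 1), shuffleCompl (fun _ : Fin 1 => m) (fun _ => 1)
      (fun _ => (Finset.range (m + 1)).erase j) = fun _ => {(j : ℕ)} := fun j => by
    funext v
    rw [shuffleCompl, Finset.erase_eq,
      Finset.sdiff_sdiff_eq_self (Finset.singleton_subset_iff.mpr (Finset.mem_range.mpr j.isLt))]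
  rw [cohaMulRat, sum_shuffles_A1_one]
  refine Finset.sum_congr rfl fun j _ => ?_
  rw [hcompl, interactionNum_A1, mul_one, interactionDen, Fin.prod_univ_one, hcompl,
    Finset.prod_singleton, prod_erase_range]
  rfl

variable (F : Fin (m + 1) → Polynomial ℚ) {g : PolyQ 1}
  (hg : g * (Matrix.vandermonde (xvec m)).det = (evalMatrix (F ∘ Fin.castSucc) (xvec m)).det)
include hg

theorem cohaMulRat_A1_one_summand (j : Fin (m + 1)) :
    algebraMap (PolyQ 1) (FractionRing (PolyQ 1))
        (substAlong (fun _ => (Finset.range (m + 1)).erase j) g *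
          substAlong (fun _ => {(j : ℕ)}) (Polynomial.aeval (X (0, 0)) (F (Fin.last m)))) /
      algebraMap (PolyQ 1) (FractionRing (PolyQ 1))
        (∏ k : Fin m, (xvec (m + 1) j - xvec (m + 1) (j.succAbove k))) =
    algebraMap (PolyQ 1) (FractionRing (PolyQ 1))
        ((-1) ^ (m + (j : ℕ)) * Polynomial.aeval (xvec (m + 1) j) (F (Fin.last m)) *
          (evalMatrix (F ∘ Fin.castSucc) (xvec (m + 1) ∘ j.succAbove)).det) /
      algebraMap (PolyQ 1) (FractionRing (PolyQ 1)) (Matrix.vandermonde (xvec (m + 1))).det := by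
  set a := substAlong (fun _ => (Finset.range (m + 1)).erase j) g
  set c := Polynomial.aeval (xvec (m + 1) j) (F (Fin.last m))
  set δ := ∏ k : Fin m, (xvec (m + 1) j - xvec (m + 1) (j.succAbove k))
  set ε : PolyQ 1 := (-1) ^ (m + (j : ℕ))
  have hε : ε * ε = 1 := by rw [← pow_add, ← two_mul, pow_mul, neg_one_sq, one_pow]
  have hminor : a * (Matrix.vandermonde (xvec (m + 1) ∘ j.succAbove)).det =
      (evalMatrix (F ∘ Fin.castSucc) (xvec (m + 1) ∘ j.succAbove)).det := by
    have := congrArg (substAlong (fun _ => (Finset.range (m + 1)).erase j)) hg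
    rwa [map_mul, map_det_evalMatrix, map_det_vandermonde, substAlong_erase_comp] at this
  have hden := prod_sub_mul_det_vandermonde_succAbove (xvec (m + 1)) j
  have hδ : δ ≠ 0 := by
    refine left_ne_zero_of_mul (b := (Matrix.vandermonde (xvec (m + 1) ∘ j.succAbove)).det) ?_
    rw [hden]
    exact mul_ne_zero (pow_ne_zero _ (neg_ne_zero.mpr one_ne_zero))
      (det_vandermonde_xvec_ne_zero _)
  have hlast :
      substAlong (fun _ => {(j : ℕ)}) (Polynomial.aeval (X (0, 0)) (F (Fin.last m))) = c := by
    rw [← Polynomial.aeval_algHom_apply, substAlong_X, Finset.sort_singleton]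
    rfl
  rw [hlast, div_eq_div_iff ((map_ne_zero_iff _ (IsFractionRing.injective _ _)).mpr hδ)
    ((map_ne_zero_iff _ (IsFractionRing.injective _ _)).mpr (det_vandermonde_xvec_ne_zero _)),
    ← map_mul, ← map_mul]
  congr 1
  linear_combination (ε * c * δ) * hminor - (ε * c * a) * hden -
    (a * c * (Matrix.vandermonde (xvec (m + 1))).det) * hε

theorem cohaMulRat_A1_one_eq_div :
    cohaMulRat A1 (fun _ => m) (fun _ => 1) g (Polynomial.aeval (X (0, 0)) (F (Fin.last m))) =
      algebraMap (PolyQ 1) (FractionRing (PolyQ 1)) (evalMatrix F (xvec (m + 1))).det /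
        algebraMap (PolyQ 1) (FractionRing (PolyQ 1)) (Matrix.vandermonde (xvec (m + 1))).det := by
  rw [cohaMulRat_A1_one, Finset.sum_congr rfl fun j _ => cohaMulRat_A1_one_summand F hg j,
    ← Finset.sum_div, ← map_sum, ← det_evalMatrix_succ]

theorem cohaMul_A1_mul_det_vandermonde :
    cohaMul A1 (fun _ => m) oneDim g (Polynomial.aeval (X (0, 0)) (F (Fin.last m))) *
        (Matrix.vandermonde (xvec (m + 1))).det =
      (evalMatrix F (xvec (m + 1))).det := by
  obtain ⟨P, hP⟩ := det_vandermonde_xvec_dvd F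
  have hV := (map_ne_zero_iff _ (IsFractionRing.injective (PolyQ 1) (FractionRing (PolyQ 1)))).mpr
    (det_vandermonde_xvec_ne_zero (m + 1))
  show cohaMul A1 (fun _ => m) (fun _ => 1) _ _ * _ = _
  rw [cohaMul_eq_of_algebraMap_eq (P := P) ?_, hP, mul_comm]
  rw [cohaMulRat_A1_one_eq_div F hg, hP, map_mul, mul_div_cancel_left₀ _ hV]

end A1

section IteratedProduct

variable (Q : FinQuiver n)

theorem cohaProd_fst (L : List ((Fin n → ℕ) × PolyQ n)) :
    (cohaProd Q L).1 = (L.map Prod.fst).sum := by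
  suffices h : ∀ (L : List ((Fin n → ℕ) × PolyQ n)) acc,
      (L.foldl (fun acc y => (acc.1 + y.1, cohaMul Q acc.1 y.1 acc.2 y.2)) acc).1 =
        acc.1 + (L.map Prod.fst).sum by
    cases L with
    | nil => rfl
    | cons x L => simpa [cohaProd] using h L x
  intro L
  induction L with
  | nil => simp
  | cons y L ih => intro acc; simp [ih, add_assoc]

theorem cohaProd_append_singleton {L : List ((Fin n → ℕ) × PolyQ n)} (hL : L ≠ [])
    (y : (Fin n → ℕ) × PolyQ n) :
    cohaProd Q (L ++ [y]) =
      ((cohaProd Q L).1 + y.1, cohaMul Q (cohaProd Q L).1 y.1 (cohaProd Q L).2 y.2) := by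
  obtain ⟨x, L, rfl⟩ := List.exists_cons_of_ne_nil hL
  simp [cohaProd, List.foldl_append]

theorem cohaProdFin_zero (γ : Fin 0 → Fin n → ℕ) (f : Fin 0 → PolyQ n) :
    cohaProdFin Q γ f = 1 :=
  rfl

theorem cohaProdFin_one (γ : Fin 1 → Fin n → ℕ) (f : Fin 1 → PolyQ n) :
    cohaProdFin Q γ f = f 0 :=
  rfl

theorem cohaProdFin_succ {r : ℕ} (γ : Fin (r + 2) → Fin n → ℕ) (f : Fin (r + 2) → PolyQ n) :
    cohaProdFin Q γ f =
      cohaMul Q (∑ u : Fin (r + 1), γ u.castSucc) (γ (Fin.last _))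
        (cohaProdFin Q (γ ∘ Fin.castSucc) (f ∘ Fin.castSucc)) (f (Fin.last _)) := by
  rw [cohaProdFin, List.ofFn_succ', List.concat_eq_append, cohaProd_append_singleton _ (by simp),
    cohaProd_fst, List.map_ofFn, List.sum_ofFn]
  rfl

end IteratedProduct

theorem sum_const_oneDim (r : ℕ) : ∑ _u : Fin r, oneDim = fun _ => r := by
  funext
  simp [oneDim]

theorem cohaProdFin_A1_mul_det_vandermonde (r : ℕ) (F : Fin r → Polynomial ℚ) :
    cohaProdFin A1 (fun _ => oneDim) (fun u => Polynomial.aeval (X (0, 0)) (F u)) *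
        (Matrix.vandermonde (xvec r)).det =
      (evalMatrix F (xvec r)).det := by
  induction r with
  | zero => simp [cohaProdFin_zero]
  | succ r ih =>
    cases r with
    | zero =>
      rw [cohaProdFin_one, Matrix.det_fin_one, Matrix.det_fin_one]
      simp [evalMatrix, Matrix.vandermonde_apply, xvec]
    | succ r =>
      rw [cohaProdFin_succ, sum_const_oneDim]
      exact cohaMul_A1_mul_det_vandermonde F (ih (F ∘ Fin.castSucc))

section Transfer

variable (i : Fin n)

noncomputable def toVertex : PolyQ 1 →ₐ[ℚ] PolyQ n :=
  rename fun p => (i, p.2)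

theorem toVertex_X (p : Fin 1 × ℕ) : toVertex i (X p) = X (i, p.2) :=
  rename_X _ p

theorem toVertex_injective : Function.Injective (toVertex i) :=
  rename_injective _ fun _ _ h => Prod.ext (Subsingleton.elim _ _) (Prod.ext_iff.mp h).2

noncomputable def fromVertex : PolyQ n →ₐ[ℚ] PolyQ 1 :=
  aeval fun p => if p.1 = i then X (0, p.2) else 0

theorem fromVertex_toVertex (f : PolyQ 1) : fromVertex i (toVertex i f) = f := by
  suffices h : (fromVertex i).comp (toVertex i) = AlgHom.id ℚ (PolyQ 1) from
    AlgHom.congr_fun h f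
  refine algHom_ext fun p => ?_
  simp [fromVertex, toVertex_X, Subsingleton.elim _ p.1]

noncomputable def toVertexFrac : FractionRing (PolyQ 1) →+* FractionRing (PolyQ n) :=
  IsFractionRing.lift
    (g := (algebraMap (PolyQ n) (FractionRing (PolyQ n))).comp (toVertex i).toRingHom)
    ((IsFractionRing.injective (PolyQ n) (FractionRing (PolyQ n))).comp (toVertex_injective i))

theorem toVertexFrac_algebraMap (f : PolyQ 1) :
    toVertexFrac i (algebraMap (PolyQ 1) (FractionRing (PolyQ 1)) f) =
      algebraMap (PolyQ n) (FractionRing (PolyQ n)) (toVertex i f) :=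
  IsFractionRing.lift_algebraMap _ _

theorem exists_algebraMap_eq_of_toVertexFrac {x : FractionRing (PolyQ 1)}
    (h : ∃ P, algebraMap (PolyQ n) (FractionRing (PolyQ n)) P = toVertexFrac i x) :
    ∃ P, algebraMap (PolyQ 1) (FractionRing (PolyQ 1)) P = x := by
  obtain ⟨P, hP⟩ := h
  obtain ⟨a, b, hb, rfl⟩ := IsFractionRing.div_surjective (A := PolyQ 1) x
  have hb0 : algebraMap (PolyQ 1) (FractionRing (PolyQ 1)) b ≠ 0 :=
    IsFractionRing.to_map_ne_zero_of_mem_nonZeroDivisors hb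
  have hPb : P * toVertex i b = toVertex i a := by
    refine IsFractionRing.injective (PolyQ n) (FractionRing (PolyQ n)) ?_
    rw [map_mul, hP, map_div₀, toVertexFrac_algebraMap, toVertexFrac_algebraMap,
      div_mul_cancel₀]
    rw [← toVertexFrac_algebraMap]
    exact (map_ne_zero _).mpr hb0
  refine ⟨fromVertex i P, ?_⟩
  rw [eq_div_iff hb0, ← map_mul]
  congr 1
  simpa only [map_mul, fromVertex_toVertex] using congrArg (fromVertex i) hPb

def atVertex (t : Finset ℕ) : Fin n → Finset ℕ :=
  fun v => if v = i then t else ∅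

variable (r s : ℕ)

theorem sum_shuffles_single {M : Type*} [AddCommMonoid M] (φ : (Fin n → Finset ℕ) → M) :
    ∑ S ∈ shuffles (Pi.single i r) (Pi.single i s), φ S =
      ∑ T ∈ shuffles (fun _ : Fin 1 => r) (fun _ => s), φ (atVertex i (T 0)) := by
  symm
  refine Finset.sum_nbij' (fun T => atVertex i (T 0)) (fun S _ => S i) (fun T hT => ?_)
    (fun S hS => ?_) (fun T _ => ?_) (fun S hS => ?_) fun _ _ => rfl
  · simp only [shuffles, Fintype.mem_piFinset] at hT ⊢
    intro v
    by_cases hv : v = i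
    · subst hv
      simpa [atVertex] using hT 0
    · simp [atVertex, hv]
  · simp only [shuffles, Fintype.mem_piFinset] at hS ⊢
    intro _
    simpa using hS i
  · funext v
    simp [atVertex, Subsingleton.elim v 0]
  · simp only [shuffles, Fintype.mem_piFinset, Finset.mem_filter] at hS
    funext v
    by_cases hv : v = i
    · simp [atVertex, hv]
    · simpa [atVertex, hv, eq_comm] using (hS v).2

theorem shuffleCompl_atVertex (t : Finset ℕ) :
    shuffleCompl (Pi.single i r) (Pi.single i s) (atVertex i t) =
      atVertex i (Finset.range (r + s) \ t) := by
  funext v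
  by_cases hv : v = i
  · subst hv
    simp [shuffleCompl, atVertex]
  · simp [shuffleCompl, atVertex, hv]

theorem substAlong_atVertex_toVertex (t : Finset ℕ) (g : PolyQ 1) :
    substAlong (atVertex i t) (toVertex i g) = toVertex i (substAlong (fun _ => t) g) := by
  suffices h : (substAlong (atVertex i t)).comp (toVertex i) =
      (toVertex i).comp (substAlong fun _ => t) from AlgHom.congr_fun h g
  refine algHom_ext fun p => ?_
  simp [substAlong_X, toVertex_X, atVertex]

theorem interactionNum_atVertex {Q : FinQuiver n} (hQ : ∀ a : Q.Arr, Q.hd a ≠ Q.tl a)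
    (t : Finset ℕ) :
    interactionNum Q (Pi.single i r) (Pi.single i s) (atVertex i t) = 1 := by
  refine Finset.prod_eq_one fun a _ => ?_
  rw [arrowFactor, shuffleCompl_atVertex]
  by_cases ht : Q.tl a = i
  · have hh : Q.hd a ≠ i := ht ▸ hQ a
    simp [atVertex, hh]
  · simp [atVertex, ht]

theorem interactionDen_atVertex (t : Finset ℕ) :
    interactionDen (Pi.single i r) (Pi.single i s) (atVertex i t) =
      toVertex i (interactionDen (fun _ => r) (fun _ => s) (fun _ => t)) := by
  rw [interactionDen, Finset.prod_eq_single i (fun v _ hv => by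
    simp [shuffleCompl_atVertex, atVertex, hv]) (by simp)]
  simp [interactionDen, shuffleCompl, atVertex, map_prod, toVertex_X]

theorem cohaMulRat_toVertex {Q : FinQuiver n} (hQ : ∀ a : Q.Arr, Q.hd a ≠ Q.tl a)
    (g₁ g₂ : PolyQ 1) :
    cohaMulRat Q (Pi.single i r) (Pi.single i s) (toVertex i g₁) (toVertex i g₂) =
      toVertexFrac i (cohaMulRat A1 (fun _ => r) (fun _ => s) g₁ g₂) := by
  rw [cohaMulRat, sum_shuffles_single, cohaMulRat, map_sum]
  refine Finset.sum_congr rfl fun T _ => ?_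
  have hT : T = fun _ => T 0 := funext fun v => congrArg T (Subsingleton.elim v 0)
  have hTc : shuffleCompl (fun _ => r) (fun _ => s) T = fun _ => Finset.range (r + s) \ T 0 :=
    funext fun v => by rw [Subsingleton.elim v 0]; rfl
  rw [map_div₀, toVertexFrac_algebraMap, toVertexFrac_algebraMap, shuffleCompl_atVertex,
    substAlong_atVertex_toVertex, substAlong_atVertex_toVertex, interactionNum_atVertex i r s hQ,
    interactionDen_atVertex, interactionNum_A1, mul_one, mul_one, ← hT, hTc, map_mul (toVertex i),
    map_mul (algebraMap _ _)]

theorem cohaMul_toVertex {Q : FinQuiver n} (hQ : ∀ a : Q.Arr, Q.hd a ≠ Q.tl a)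
    (g₁ g₂ : PolyQ 1) :
    cohaMul Q (Pi.single i r) (Pi.single i s) (toVertex i g₁) (toVertex i g₂) =
      toVertex i (cohaMul A1 (fun _ => r) (fun _ => s) g₁ g₂) := by
  -- `cohaMul` is `0` when the localization sum is not a polynomial, so that case is needed too.
  by_cases hex : ∃ P, algebraMap (PolyQ 1) (FractionRing (PolyQ 1)) P =
      cohaMulRat A1 (fun _ => r) (fun _ => s) g₁ g₂
  · obtain ⟨P, hP⟩ := hex
    rw [cohaMul_eq_of_algebraMap_eq hP, cohaMul_eq_of_algebraMap_eq]
    rw [cohaMulRat_toVertex i r s hQ, ← hP, toVertexFrac_algebraMap]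
  · have hexQ : ¬∃ P, algebraMap (PolyQ n) (FractionRing (PolyQ n)) P =
        cohaMulRat Q (Pi.single i r) (Pi.single i s) (toVertex i g₁) (toVertex i g₂) := by
      rw [cohaMulRat_toVertex i r s hQ]
      exact fun h => hex (exists_algebraMap_eq_of_toVertexFrac i h)
    rw [cohaMul, dif_neg hexQ, cohaMul, dif_neg hex, map_zero]

theorem mul_simpleDim_eq_single (r : ℕ) : (fun v => r * simpleDim i v) = Pi.single i r := by
  funext v
  simp [simpleDim, Pi.single_apply]

theorem simpleDim_eq_single : simpleDim i = Pi.single i 1 := by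
  simpa using mul_simpleDim_eq_single i 1

theorem sum_const_simpleDim (r : ℕ) : ∑ _u : Fin r, simpleDim i = Pi.single i r := by
  rw [Finset.sum_const, Finset.card_univ, Fintype.card_fin, simpleDim_eq_single, ← Pi.single_smul,
    smul_eq_mul, mul_one]

theorem cohaProdFin_toVertex {Q : FinQuiver n} (hQ : ∀ a : Q.Arr, Q.hd a ≠ Q.tl a) {r : ℕ}
    (f : Fin r → PolyQ 1) :
    cohaProdFin Q (fun _ => simpleDim i) (toVertex i ∘ f) =
      toVertex i (cohaProdFin A1 (fun _ => oneDim) f) := by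
  induction r with
  | zero => exact (map_one _).symm
  | succ r ih =>
    cases r with
    | zero => rfl
    | succ r =>
      have h := cohaMul_toVertex i (r + 1) 1 hQ
        (cohaProdFin A1 (fun _ => oneDim) (f ∘ Fin.castSucc)) (f (Fin.last _))
      rw [← ih, simpleDim_eq_single] at h
      rw [cohaProdFin_succ, cohaProdFin_succ, sum_const_oneDim, sum_const_simpleDim,
        simpleDim_eq_single]
      exact h

theorem cohaProdFin_aeval_X_eq_toVertex {Q : FinQuiver n} (hQ : ∀ a : Q.Arr, Q.hd a ≠ Q.tl a)
    {r : ℕ} (f : Fin r → Polynomial ℚ) :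
    cohaProdFin Q (fun _ => simpleDim i) (fun u => Polynomial.aeval (X (i, 0) : PolyQ n) (f u)) =
      toVertex i
        (cohaProdFin A1 (fun _ => oneDim) (fun u => Polynomial.aeval (X (0, 0)) (f u))) := by
  rw [← cohaProdFin_toVertex i hQ]
  congr 1
  funext u
  rw [Function.comp_apply, ← Polynomial.aeval_algHom_apply, toVertex_X]

end Transfer

section Symmetric

variable {r : ℕ}

theorem exists_perm_fin_eq (σ : Equiv.Perm ℕ) (hσ : ∀ j, σ j ≠ j → j < r) :
    ∃ π : Equiv.Perm (Fin r), ∀ k : Fin r, σ k = π k := by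
  have hfix : ∀ j, r ≤ j → σ j = j := fun j hj => by_contra fun h => (hσ j h).not_ge hj
  have hlt : ∀ k, σ k < r ↔ k < r := fun k => by
    refine ⟨fun h => by_contra fun hk => ?_, fun hk => by_contra fun h => ?_⟩
    · rw [hfix k (not_lt.mp hk)] at h
      exact hk h
    · rw [σ.injective (hfix _ (not_lt.mp h))] at h
      exact h hk
  exact ⟨Fin.equivSubtype.symm.permCongr (σ.subtypePerm hlt), fun k => by simp [Fin.equivSubtype]⟩

theorem rename_vertexPerm_comp (σ : Equiv.Perm ℕ) (π : Equiv.Perm (Fin r))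
    (hσπ : ∀ k : Fin r, σ k = π k) :
    rename (vertexPerm 0 σ) ∘ xvec r = xvec r ∘ π := by
  funext k
  simp [xvec, vertexPerm, hσπ]

noncomputable def truncate (r : ℕ) : PolyQ 1 →ₐ[ℚ] PolyQ 1 :=
  aeval fun p => if p.2 < r then X p else 0

theorem truncate_comp_xvec : truncate r ∘ xvec r = xvec r := by
  funext k
  simp [truncate, xvec]

theorem vars_lt_of_truncate_eq {g : PolyQ 1} (h : truncate r g = g) : ∀ p ∈ g.vars, p.2 < r := by
  intro p hp
  rw [← h] at hp
  obtain ⟨q, -, hq⟩ := Finset.mem_biUnion.mp (vars_bind₁ _ g hp)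
  split_ifs at hq with hlt
  · rw [vars_X, Finset.mem_singleton] at hq
    exact hq ▸ hlt
  · simp at hq

variable {g : PolyQ 1} {F : Fin r → Polynomial ℚ}

theorem truncate_eq_of_mul_det_vandermonde_eq
    (h : g * (Matrix.vandermonde (xvec r)).det = (evalMatrix F (xvec r)).det) :
    truncate r g = g := by
  refine mul_right_cancel₀ (det_vandermonde_xvec_ne_zero r) ?_
  have := congrArg (truncate r) h
  rwa [map_mul, map_det_vandermonde, map_det_evalMatrix, truncate_comp_xvec, ← h] at this

theorem symmIn_of_mul_det_vandermonde_eq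
    (h : g * (Matrix.vandermonde (xvec r)).det = (evalMatrix F (xvec r)).det) :
    SymmIn (fun _ => r) g := by
  intro v σ hσ
  obtain rfl : v = 0 := Subsingleton.elim _ _
  beta_reduce at hσ ⊢
  obtain ⟨π, hπ⟩ := exists_perm_fin_eq σ hσ
  have hsign : ((Equiv.Perm.sign π : ℤ) : PolyQ 1) ≠ 0 := by
    rcases Int.units_eq_one_or (Equiv.Perm.sign π) with h | h <;> simp [h]
  refine mul_right_cancel₀ (mul_ne_zero hsign (det_vandermonde_xvec_ne_zero r)) ?_
  have := congrArg (rename (vertexPerm 0 σ)) h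
  rw [map_mul, map_det_vandermonde, map_det_evalMatrix, rename_vertexPerm_comp σ π hπ,
    det_vandermonde_comp_perm, det_evalMatrix_comp_perm, ← h] at this
  linear_combination this

theorem mem_Hspace_of_mul_det_vandermonde_eq
    (h : g * (Matrix.vandermonde (xvec r)).det = (evalMatrix F (xvec r)).det) :
    g ∈ Hspace (fun _ : Fin 1 => r) :=
  ⟨vars_lt_of_truncate_eq (truncate_eq_of_mul_det_vandermonde_eq h),
    symmIn_of_mul_det_vandermonde_eq h⟩

end Symmetric

section Antisymmetrization

variable {r : ℕ}

theorem extendDomain_equivSubtype_apply (π : Equiv.Perm (Fin r)) (k : Fin r) :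
    π.extendDomain Fin.equivSubtype k = π k := by
  rw [Equiv.Perm.extendDomain_apply_subtype π Fin.equivSubtype k.isLt]
  rfl

theorem lt_of_extendDomain_equivSubtype_ne (π : Equiv.Perm (Fin r)) (j : ℕ)
    (hj : π.extendDomain Fin.equivSubtype j ≠ j) : j < r :=
  by_contra fun h => hj (Equiv.Perm.extendDomain_apply_not_subtype _ _ h)

theorem monomial_eq_prod_xvec {d : Fin 1 × ℕ →₀ ℕ} (hd : ∀ p ∈ d.support, p.2 < r) (c : ℚ) :
    (monomial d c : PolyQ 1) = C c * ∏ u : Fin r, xvec r u ^ d (0, u) := by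
  rw [monomial_eq, Finsupp.prod]
  congr 1
  refine (Finset.prod_subset (fun p hp => ?_) fun p _ hp => ?_).trans
    (Finset.prod_image (f := fun p => (X p : PolyQ 1) ^ d p)
      fun _ _ _ _ h => Fin.val_injective (congrArg Prod.snd h))
  · exact Finset.mem_image.mpr ⟨⟨p.2, hd p hp⟩, Finset.mem_univ _,
      Prod.ext (Subsingleton.elim _ _) rfl⟩
  · rw [Finsupp.notMem_support_iff.mp hp, pow_zero]

theorem factorial_smul_eq_sum_det_evalMatrix {A : PolyQ 1} (hvars : ∀ p ∈ A.vars, p.2 < r)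
    (hanti : ∀ π : Equiv.Perm (Fin r),
      rename (vertexPerm 0 (π.extendDomain Fin.equivSubtype)) A = Equiv.Perm.sign π * A) :
    (r.factorial : ℚ) • A = ∑ d ∈ A.support, coeff d A •
      (evalMatrix (fun u => (Polynomial.X : Polynomial ℚ) ^ d (0, u)) (xvec r)).det := by
  have hsign : ∀ π : Equiv.Perm (Fin r),
      (Equiv.Perm.sign π : PolyQ 1) * Equiv.Perm.sign π = 1 := fun π => by
    rw [← Int.cast_mul, ← Units.val_mul, Int.units_mul_self, Units.val_one, Int.cast_one]
  calc (r.factorial : ℚ) • A = ∑ _π : Equiv.Perm (Fin r), A := by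
        rw [Finset.sum_const, Finset.card_univ, Fintype.card_perm, Fintype.card_fin,
          Nat.cast_smul_eq_nsmul]
    _ = ∑ π : Equiv.Perm (Fin r), ∑ d ∈ A.support, Equiv.Perm.sign π *
          rename (vertexPerm 0 (π.extendDomain Fin.equivSubtype)) (monomial d (coeff d A)) := by
        refine Finset.sum_congr rfl fun π _ => ?_
        rw [← Finset.mul_sum, ← map_sum, ← A.as_sum, hanti, ← mul_assoc, hsign, one_mul]
    _ = _ := by
        rw [Finset.sum_comm]
        refine Finset.sum_congr rfl fun d hd => ?_
        rw [det_evalMatrix_X_pow, Finset.smul_sum]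
        refine Finset.sum_congr rfl fun π _ => ?_
        have hd' : ∀ p ∈ d.support, p.2 < r := fun p hp =>
          hvars p ((mem_vars_iff_mem_support p).mpr ⟨d, hd, hp⟩)
        have hπ := congrFun (rename_vertexPerm_comp _ π (extendDomain_equivSubtype_apply π))
        simp only [Function.comp_apply] at hπ
        simp only [monomial_eq_prod_xvec hd', map_mul, rename_C, map_prod, map_pow, hπ,
          smul_eq_C_mul]
        ring

end Antisymmetrization

theorem Hspace_A1_le_span (r : ℕ) :
    Hspace (fun _ : Fin 1 => r) ≤ Submodule.span ℚ (Set.range fun F : Fin r → Polynomial ℚ =>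
      cohaProdFin A1 (fun _ => oneDim) (fun u => Polynomial.aeval (X (0, 0)) (F u))) := by
  rintro f ⟨hvars, hsym⟩
  set V := (Matrix.vandermonde (xvec r)).det
  have hVvars : ∀ p ∈ V.vars, p.2 < r := vars_lt_of_truncate_eq (by
    rw [map_det_vandermonde, truncate_comp_xvec])
  have hanti : ∀ π : Equiv.Perm (Fin r),
      rename (vertexPerm 0 (π.extendDomain Fin.equivSubtype)) (f * V) =
        Equiv.Perm.sign π * (f * V) := fun π => by
    rw [map_mul, hsym 0 _ (lt_of_extendDomain_equivSubtype_ne π), map_det_vandermonde,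
      rename_vertexPerm_comp _ π (extendDomain_equivSubtype_apply π), det_vandermonde_comp_perm]
    ring
  have hsum := factorial_smul_eq_sum_det_evalMatrix (fun p hp =>
    (Finset.mem_union.mp (vars_mul f V hp)).elim (hvars p) (hVvars p)) hanti
  simp_rw [← cohaProdFin_A1_mul_det_vandermonde, ← smul_mul_assoc, ← Finset.sum_mul] at hsum
  rw [← inv_smul_smul₀ (Nat.cast_ne_zero.mpr r.factorial_ne_zero : (r.factorial : ℚ) ≠ 0) f,
    mul_right_cancel₀ (det_vandermonde_xvec_ne_zero r) hsum]
  exact Submodule.smul_mem _ _ (Submodule.sum_mem _ fun d _ =>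
    Submodule.smul_mem _ _ (Submodule.subset_span ⟨_, rfl⟩))

theorem Hspace_A1_eq_span (r : ℕ) :
    Hspace (fun _ : Fin 1 => r) = Submodule.span ℚ (Set.range fun F : Fin r → Polynomial ℚ =>
      cohaProdFin A1 (fun _ => oneDim) (fun u => Polynomial.aeval (X (0, 0)) (F u))) :=
  le_antisymm (Hspace_A1_le_span r) <| Submodule.span_le.mpr <| Set.range_subset_iff.mpr fun F =>
    mem_Hspace_of_mul_det_vandermonde_eq (cohaProdFin_A1_mul_det_vandermonde r F)

end CoHA

/-- For a vertex `i` of the acyclic quiver `Q`, iterated CoHA products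
of elements `f(ω_{i,1}) ∈ ℋ_{e_i}` are computed in `ℋ(A₁)`: the `r`-fold product equals
the `ℋ(A₁)`-product `f₁(x₁) * ⋯ * f_r(x₁)` with `x_b ↦ ω_{i,b}`.  Consequently the
subalgebra `𝒜_{e_i}` generated under `*` by `{f(ω_{i,1})}` is isomorphic as an algebra
to `ℋ(A₁)`: the substitution `x_b ↦ ω_{i,b}` is injective, intertwines the two CoHA
products on the graded pieces, and carries `ℋ_r(A₁)` onto the span of the `r`-fold
products of generators. -/
theorem coha_simple_vertex_eq_A1 {n : ℕ} (Q : FinQuiver n) (hQ : Q.Acyclic) (i : Fin n) :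
    (∀ (r : ℕ) (f : Fin r → Polynomial ℚ),
      cohaProdFin Q (fun _ => simpleDim i)
          (fun u => Polynomial.aeval (X (i, 0) : PolyQ n) (f u)) =
        rename (fun p : Fin 1 × ℕ => (i, p.2))
          (cohaProdFin A1 (fun _ => oneDim)
            (fun u => Polynomial.aeval (X ((0 : Fin 1), 0) : PolyQ 1) (f u)))) ∧
    Function.Injective (rename (fun p : Fin 1 × ℕ => (i, p.2)) : PolyQ 1 → PolyQ n) ∧
    (∀ (r s : ℕ) (g₁ g₂ : PolyQ 1), g₁ ∈ Hspace (fun _ => r) → g₂ ∈ Hspace (fun _ => s) →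
      rename (fun p : Fin 1 × ℕ => (i, p.2)) (cohaMul A1 (fun _ => r) (fun _ => s) g₁ g₂) =
        cohaMul Q (fun v => r * simpleDim i v) (fun v => s * simpleDim i v)
          (rename (fun p : Fin 1 × ℕ => (i, p.2)) g₁)
          (rename (fun p : Fin 1 × ℕ => (i, p.2)) g₂)) ∧
    (∀ r : ℕ,
      Submodule.map
          (rename (fun p : Fin 1 × ℕ => (i, p.2)) : PolyQ 1 →ₐ[ℚ] PolyQ n).toLinearMap
          (Hspace (fun _ => r)) =
        Submodule.span ℚ {g : PolyQ n | ∃ f : Fin r → Polynomial ℚ,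
          g = cohaProdFin Q (fun _ => simpleDim i)
            (fun u => Polynomial.aeval (X (i, 0) : PolyQ n) (f u))}) := by
  have hloop := hQ.hd_ne_tl
  have hgen := fun r => CoHA.cohaProdFin_aeval_X_eq_toVertex i hloop (r := r)
  refine ⟨hgen, CoHA.toVertex_injective i, fun r s g₁ g₂ _ _ => ?_, fun r => ?_⟩
  · rw [CoHA.mul_simpleDim_eq_single, CoHA.mul_simpleDim_eq_single]
    exact (CoHA.cohaMul_toVertex i r s hloop g₁ g₂).symm
  · have hset : {g : PolyQ n | ∃ f : Fin r → Polynomial ℚ, g = cohaProdFin Q (fun _ => simpleDim i)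
        (fun u => Polynomial.aeval (X (i, 0) : PolyQ n) (f u))} =
        CoHA.toVertex i '' Set.range fun F : Fin r → Polynomial ℚ =>
          cohaProdFin A1 (fun _ => oneDim) (fun u => Polynomial.aeval (X (0, 0)) (F u)) := by
      ext g
      simp [hgen, eq_comm]
    rw [hset, CoHA.Hspace_A1_eq_span]
    exact (Submodule.span_image (CoHA.toVertex i).toLinearMap).symm
end

section
/- Let Q be a finite acyclic quiver whose vertex set Q₀ = {1,…,n} is ordered head-before-tail, i.e. h(a) < t(a) for every arrow a. Let γ be a dimension vector, let e_i denote the simple dimension vector with 1 at vertex i and 0 elsewhere, and for each i ∈ {1,…,n} let f_i ∈ ℋ_{γ(i)·e_i}, i.e. f_i is a symmetric polynomial in ω_{i,1},…,ω_{i,γ(i)}. Then the left-to-right CoHA product satisfies f₁ * f₂ * ⋯ * f_n = ∏_{i=1}^n f_i(ω_{i,1},…,ω_{i,γ(i)}) in ℋ_γ. -/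
open MvPolynomial
open scoped Classical

variable {n : ℕ}

/- For dimension vectors with disjoint supports and no arrow from the support of
`γ₁` to that of `γ₂`, the localization sum has a single term, the trivial shuffle, whose
interaction numerator and denominator are empty products; so `f₁ * f₂` is the ordinary
product.  Ordering the vertices head before tail makes every pair `γ(i)·e_i`, `γ(j)·e_j`
with `i < j` of this kind, and the property is stable under adding the left factors. -/

namespace FinQuiver

variable (Q : FinQuiver n)

/-- Disjoint supports, and no arrow with tail in the support of `γ₁` and head in that of `γ₂`. -/
def Separated (γ₁ γ₂ : Fin n → ℕ) : Prop :=
  (∀ v, γ₁ v = 0 ∨ γ₂ v = 0) ∧ ∀ a : Q.Arr, γ₂ (Q.hd a) = 0 ∨ γ₁ (Q.tl a) = 0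

variable {Q}

lemma Separated.add_left {δ₁ δ₂ γ : Fin n → ℕ} (h₁ : Q.Separated δ₁ γ) (h₂ : Q.Separated δ₂ γ) :
    Q.Separated (δ₁ + δ₂) γ := by
  refine ⟨fun v => ?_, fun a => ?_⟩
  · rcases h₁.1 v with h | h <;> rcases h₂.1 v with h' | h' <;> simp [h, h']
  · rcases h₁.2 a with h | h <;> rcases h₂.2 a with h' | h' <;> simp [h, h']

lemma separated_single (hht : ∀ a : Q.Arr, Q.hd a < Q.tl a) {i j : Fin n} (hij : i < j)
    (c d : ℕ) : Q.Separated (Pi.single i c) (Pi.single j d) := by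
  refine ⟨fun v => ?_, fun a => ?_⟩
  · by_cases hv : v = i
    · subst hv
      exact Or.inr (Pi.single_eq_of_ne hij.ne _)
    · exact Or.inl (Pi.single_eq_of_ne hv _)
  · by_cases ha : Q.hd a = j
    · refine Or.inr (Pi.single_eq_of_ne ?_ _)
      have := hht a
      omega
    · exact Or.inl (Pi.single_eq_of_ne ha _)

end FinQuiver

def VarsBelow (γ : Fin n → ℕ) (f : PolyQ n) : Prop :=
  ∀ p ∈ f.vars, p.2 < γ p.1

lemma VarsBelow.mul {γ₁ γ₂ : Fin n → ℕ} {f₁ f₂ : PolyQ n} (h₁ : VarsBelow γ₁ f₁)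
    (h₂ : VarsBelow γ₂ f₂) : VarsBelow (γ₁ + γ₂) (f₁ * f₂) := by
  intro p hp
  rcases Finset.mem_union.mp (vars_mul f₁ f₂ hp) with h | h
  · exact (h₁ p h).trans_le (Nat.le_add_right _ _)
  · exact (h₂ p h).trans_le (Nat.le_add_left _ _)

lemma substAlong_range_eq_self {γ : Fin n → ℕ} {f : PolyQ n} (hf : VarsBelow γ f) :
    substAlong (fun i => Finset.range (γ i)) f = f :=
  calc substAlong (fun i => Finset.range (γ i)) f = aeval X f :=
        eval₂Hom_congr' rfl (fun p hp _ => by simp [Finset.sort_range, hf p hp]) rfl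
    _ = f := aeval_X_left_apply f

section Separated

variable {γ₁ γ₂ : Fin n → ℕ}

lemma shuffles_eq_singleton (hdisj : ∀ v, γ₁ v = 0 ∨ γ₂ v = 0) :
    shuffles γ₁ γ₂ = {fun i => Finset.range (γ₁ i)} := by
  ext S
  simp only [shuffles, Fintype.mem_piFinset, Finset.mem_filter, Finset.mem_powerset,
    Finset.mem_singleton]
  constructor
  · intro hS
    funext i
    obtain ⟨hsub, hcard⟩ := hS i
    rcases hdisj i with h | h
    · rw [h] at hcard ⊢
      rw [Finset.card_eq_zero.mp hcard, Finset.range_zero]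
    · rw [h, add_zero] at hsub
      exact Finset.eq_of_subset_of_card_le hsub (by rw [Finset.card_range, hcard])
  · rintro rfl i
    exact ⟨Finset.range_subset_range.mpr (Nat.le_add_right _ _), Finset.card_range _⟩

lemma shuffleCompl_range (hdisj : ∀ v, γ₁ v = 0 ∨ γ₂ v = 0) :
    shuffleCompl γ₁ γ₂ (fun i => Finset.range (γ₁ i)) = fun i => Finset.range (γ₂ i) := by
  funext i
  rcases hdisj i with h | h <;> simp [shuffleCompl, h]

lemma interactionDen_range (hdisj : ∀ v, γ₁ v = 0 ∨ γ₂ v = 0) :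
    interactionDen γ₁ γ₂ (fun i => Finset.range (γ₁ i)) = 1 := by
  refine Finset.prod_eq_one fun i _ => ?_
  rw [shuffleCompl_range hdisj]
  rcases hdisj i with h | h <;> simp [h]

lemma interactionNum_range {Q : FinQuiver n} (hsep : Q.Separated γ₁ γ₂) :
    interactionNum Q γ₁ γ₂ (fun i => Finset.range (γ₁ i)) = 1 := by
  refine Finset.prod_eq_one fun a _ => ?_
  rw [arrowFactor, shuffleCompl_range hsep.1]
  rcases hsep.2 a with h | h <;> simp [h]

lemma cohaMul_eq_of_cohaMulRat_eq {Q : FinQuiver n} {f₁ f₂ P : PolyQ n}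
    (h : cohaMulRat Q γ₁ γ₂ f₁ f₂ = algebraMap (PolyQ n) (FractionRing (PolyQ n)) P) :
    cohaMul Q γ₁ γ₂ f₁ f₂ = P := by
  have hex : ∃ P : PolyQ n,
      algebraMap (PolyQ n) (FractionRing (PolyQ n)) P = cohaMulRat Q γ₁ γ₂ f₁ f₂ := ⟨P, h.symm⟩
  rw [cohaMul, dif_pos hex]
  exact IsFractionRing.injective (PolyQ n) (FractionRing (PolyQ n)) (hex.choose_spec.trans h)

lemma cohaMul_eq_mul_of_separated {Q : FinQuiver n} (hsep : Q.Separated γ₁ γ₂)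
    {f₁ f₂ : PolyQ n} (h₁ : VarsBelow γ₁ f₁) (h₂ : VarsBelow γ₂ f₂) :
    cohaMul Q γ₁ γ₂ f₁ f₂ = f₁ * f₂ := by
  apply cohaMul_eq_of_cohaMulRat_eq
  rw [cohaMulRat, shuffles_eq_singleton hsep.1, Finset.sum_singleton, shuffleCompl_range hsep.1,
    substAlong_range_eq_self h₁, substAlong_range_eq_self h₂, interactionNum_range hsep,
    interactionDen_range hsep.1, mul_one, map_one, div_one]

end Separated

lemma foldl_cohaMul_eq_mul_prod (Q : FinQuiver n) (l : List ((Fin n → ℕ) × PolyQ n))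
    (hvars : ∀ y ∈ l, VarsBelow y.1 y.2) (hsep : l.Pairwise fun x y => Q.Separated x.1 y.1)
    (d : Fin n → ℕ) (g : PolyQ n) (hg : VarsBelow d g) (hd : ∀ y ∈ l, Q.Separated d y.1) :
    (l.foldl (fun acc y => (acc.1 + y.1, cohaMul Q acc.1 y.1 acc.2 y.2)) (d, g)).2 =
      g * (l.map Prod.snd).prod := by
  induction l generalizing d g with
  | nil => simp
  | cons x l ih =>
    obtain ⟨hx, hl⟩ := List.forall_mem_cons.mp hvars
    obtain ⟨hxl, hsepl⟩ := List.pairwise_cons.mp hsep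
    rw [List.foldl_cons, cohaMul_eq_mul_of_separated (hd x List.mem_cons_self) hg hx,
      ih hl hsepl _ _ (hg.mul hx)
        fun y hy => (hd y (List.mem_cons_of_mem x hy)).add_left (hxl y hy),
      List.map_cons, List.prod_cons, mul_assoc]

theorem cohaProd_snd_eq_prod (Q : FinQuiver n) (l : List ((Fin n → ℕ) × PolyQ n))
    (hvars : ∀ y ∈ l, VarsBelow y.1 y.2) (hsep : l.Pairwise fun x y => Q.Separated x.1 y.1) :
    (cohaProd Q l).2 = (l.map Prod.snd).prod := by
  cases l with
  | nil => simp [cohaProd]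
  | cons x l =>
    obtain ⟨hx, hl⟩ := List.forall_mem_cons.mp hvars
    obtain ⟨hxl, hsepl⟩ := List.pairwise_cons.mp hsep
    rw [cohaProd, List.map_cons, List.prod_cons]
    exact foldl_cohaMul_eq_mul_prod Q l hl hsepl x.1 x.2 hx hxl

theorem coha_prod_of_simples_general {n : ℕ} (Q : FinQuiver n)
    (hht : ∀ a : Q.Arr, Q.hd a < Q.tl a)
    (γ : Fin n → ℕ) (f : Fin n → PolyQ n)
    (hf : ∀ i, f i ∈ Hspace (fun v => if v = i then γ i else 0)) :
    cohaProdFin Q (fun i v => if v = i then γ i else 0) f = ∏ i : Fin n, f i := by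
  have hsingle (i : Fin n) : (fun v => if v = i then γ i else 0) = Pi.single i (γ i) :=
    funext fun v => (Pi.single_apply i (γ i) v).symm
  rw [cohaProdFin, cohaProd_snd_eq_prod, List.map_ofFn, List.prod_ofFn]
  · rfl
  · simp only [List.mem_ofFn, forall_exists_index]
    rintro _ i rfl
    exact (hf i).1
  · refine List.pairwise_ofFn.mpr fun i j hij => ?_
    rw [hsingle, hsingle]
    exact FinQuiver.separated_single hht hij _ _

/-- If the vertices of the acyclic quiver `Q` are ordered head before
tail, `γ` is a dimension vector and `f i ∈ ℋ_{γ(i)·e_i}` for each vertex `i`, then the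
left-to-right CoHA product is the ordinary product of polynomials:
`f₁ * ⋯ * f_n = ∏ᵢ fᵢ(ω_{i,1},…,ω_{i,γ(i)})` in `ℋ_γ`. -/
theorem coha_prod_of_simples {n : ℕ} (Q : FinQuiver n) (hQ : Q.Acyclic)
    (hht : ∀ a : Q.Arr, Q.hd a < Q.tl a)
    (γ : Fin n → ℕ) (f : Fin n → PolyQ n)
    (hf : ∀ i, f i ∈ Hspace (fun v => if v = i then γ i else 0)) :
    cohaProdFin Q (fun i v => if v = i then γ i else 0) f = ∏ i : Fin n, f i :=
  coha_prod_of_simples_general Q hht γ f hf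
end

section
/- In ℋ(A₁), the elements ψ_p = x₁^p ∈ ℋ₁(A₁) anticommute: for all nonnegative integers p and q, ψ_p * ψ_q = − ψ_q * ψ_p in ℋ₂(A₁); in particular ψ_p * ψ_p = 0. -/
open MvPolynomial
open scoped Classical

variable {n : ℕ}

/-!
For dimension vectors `(1, 1)` the localization sum has just the two terms `S = {0}` and
`S = {1}`, with opposite denominators, so `f * g` is represented by
`(f(x₁) g(x₂) - f(x₂) g(x₁)) / (x₂ - x₁)`, which is antisymmetric in `(f, g)`.
For `f = ψ_p`, `g = ψ_q` the numerator `x₁ᵖ x₂^q - x₁^q x₂ᵖ` is divisible by `x₂ - x₁`,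
so both products are honest polynomials and the CoHA product inherits the antisymmetry.
-/

lemma cohaMul_eq_of_algebraMap_eq {Q : FinQuiver n} {γ₁ γ₂ : Fin n → ℕ} {f₁ f₂ : PolyQ n}
    (P : PolyQ n)
    (hP : algebraMap (PolyQ n) (FractionRing (PolyQ n)) P = cohaMulRat Q γ₁ γ₂ f₁ f₂) :
    cohaMul Q γ₁ γ₂ f₁ f₂ = P := by
  have hex : ∃ P : PolyQ n,
      algebraMap (PolyQ n) (FractionRing (PolyQ n)) P = cohaMulRat Q γ₁ γ₂ f₁ f₂ := ⟨P, hP⟩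
  rw [cohaMul, dif_pos hex]
  exact IsFractionRing.injective (PolyQ n) (FractionRing (PolyQ n)) (hex.choose_spec.trans hP.symm)

theorem sub_dvd_pow_mul_pow_sub_pow_mul_pow {R : Type*} [CommRing R] (a b : R) (p q : ℕ) :
    b - a ∣ a ^ p * b ^ q - a ^ q * b ^ p := by
  wlog hpq : p ≤ q generalizing p q
  · rw [← neg_sub (a ^ q * b ^ p), dvd_neg]
    exact this q p (le_of_not_ge hpq)
  obtain ⟨k, rfl⟩ := Nat.exists_eq_add_of_le hpq
  have hfactor : a ^ p * b ^ (p + k) - a ^ (p + k) * b ^ p = (a * b) ^ p * (b ^ k - a ^ k) := by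
    ring
  rw [hfactor]
  exact (sub_dvd_pow_sub_pow b a k).mul_left _

lemma shuffles_oneDim :
    shuffles oneDim oneDim = {fun _ => ({0} : Finset ℕ), fun _ => {1}} := by
  decide

lemma shuffleCompl_oneDim_zero :
    shuffleCompl oneDim oneDim (fun _ => ({0} : Finset ℕ)) = fun _ => {1} := by
  funext i; fin_cases i; decide

lemma shuffleCompl_oneDim_one :
    shuffleCompl oneDim oneDim (fun _ => ({1} : Finset ℕ)) = fun _ => {0} := by
  funext i; fin_cases i; decide

lemma interactionNum_A1 (γ₁ γ₂ : Fin 1 → ℕ) (S : Fin 1 → Finset ℕ) :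
    interactionNum A1 γ₁ γ₂ S = 1 :=
  Finset.prod_of_isEmpty (ι := Empty) _

section A1

local notation "ι" => algebraMap (PolyQ 1) (FractionRing (PolyQ 1))

lemma interactionDen_oneDim_singleton (s t : ℕ)
    (h : shuffleCompl oneDim oneDim (fun _ => {s}) = fun _ => {t}) :
    interactionDen oneDim oneDim (fun _ => {s}) = X ((0 : Fin 1), t) - X (0, s) := by
  simp [interactionDen, h]

lemma substAlong_singleton_psi (s p : ℕ) :
    substAlong (fun _ => {s}) (psi p) = X ((0 : Fin 1), s) ^ p := by
  simp [substAlong, psi, Finset.sort_singleton]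

lemma cohaMulRat_A1_oneDim (f g : PolyQ 1) :
    cohaMulRat A1 oneDim oneDim f g =
      ι (substAlong (fun _ => {0}) f * substAlong (fun _ => {1}) g -
          substAlong (fun _ => {1}) f * substAlong (fun _ => {0}) g) /
        ι (X (0, 1) - X (0, 0)) := by
  have hne : (fun _ => ({0} : Finset ℕ)) ≠ (fun _ => ({1} : Finset ℕ) : Fin 1 → Finset ℕ) := by
    decide
  rw [cohaMulRat, shuffles_oneDim, Finset.sum_insert (by simpa using hne), Finset.sum_singleton,
    shuffleCompl_oneDim_zero, shuffleCompl_oneDim_one, interactionNum_A1, interactionNum_A1,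
    interactionDen_oneDim_singleton 0 1 shuffleCompl_oneDim_zero,
    interactionDen_oneDim_singleton 1 0 shuffleCompl_oneDim_one, ← neg_sub (X (0, 1)), map_neg,
    div_neg, ← sub_eq_add_neg, ← sub_div, ← map_sub, mul_one, mul_one]

lemma cohaMulRat_A1_oneDim_swap (f g : PolyQ 1) :
    cohaMulRat A1 oneDim oneDim g f = -cohaMulRat A1 oneDim oneDim f g := by
  rw [cohaMulRat_A1_oneDim, cohaMulRat_A1_oneDim, ← neg_div, ← map_neg, neg_sub, mul_comm,
    mul_comm (substAlong _ g)]

lemma cohaMul_A1_oneDim_anticomm {f g : PolyQ 1} (P : PolyQ 1)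
    (hP : ι P = cohaMulRat A1 oneDim oneDim f g) :
    cohaMul A1 oneDim oneDim f g = -cohaMul A1 oneDim oneDim g f := by
  have hswap : ι (-P) = cohaMulRat A1 oneDim oneDim g f := by
    rw [map_neg, hP, cohaMulRat_A1_oneDim_swap f g]
  rw [cohaMul_eq_of_algebraMap_eq P hP, cohaMul_eq_of_algebraMap_eq (-P) hswap, neg_neg]

lemma exists_algebraMap_eq_cohaMulRat_psi (p q : ℕ) :
    ∃ P : PolyQ 1, ι P = cohaMulRat A1 oneDim oneDim (psi p) (psi q) := by
  obtain ⟨P, hP⟩ :=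
    sub_dvd_pow_mul_pow_sub_pow_mul_pow (X ((0 : Fin 1), 0) : PolyQ 1) (X (0, 1)) p q
  have hden : ι (X (0, 1) - X (0, 0)) ≠ 0 := by
    rw [map_ne_zero_iff _ (IsFractionRing.injective _ _), sub_ne_zero, Ne, X_inj]
    simp
  refine ⟨P, ?_⟩
  rw [cohaMulRat_A1_oneDim, substAlong_singleton_psi, substAlong_singleton_psi,
    substAlong_singleton_psi, substAlong_singleton_psi, mul_comm (X (0, 1) ^ p), hP,
    map_mul, mul_div_cancel_left₀ _ hden]

end A1

/-- In `ℋ(A₁)` the elements `ψ_p = x₁^p ∈ ℋ₁(A₁)` anticommute,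
and in particular square to zero. -/
theorem psi_anticommute (p q : ℕ) :
    cohaMul A1 oneDim oneDim (psi p) (psi q) = -cohaMul A1 oneDim oneDim (psi q) (psi p) ∧
      cohaMul A1 oneDim oneDim (psi p) (psi p) = 0 := by
  have anticomm (p q : ℕ) :
      cohaMul A1 oneDim oneDim (psi p) (psi q) = -cohaMul A1 oneDim oneDim (psi q) (psi p) :=
    let ⟨P, hP⟩ := exists_algebraMap_eq_cohaMulRat_psi p q
    cohaMul_A1_oneDim_anticomm P hP
  exact ⟨anticomm p q, self_eq_neg.mp (anticomm p p)⟩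
end
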